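/- Suppose c : Ω × ℝ → ℝ is measurable, θ ∈ L¹(Ω,μ), and 𝔼_μ[|c(·,z) − θ|] → 0 as |z| → ∞, with |c| ≤ M uniformly. Let g : ℝ → ℝ be continuous with |g(z)| ≤ min(1,z²) and ν(dz) = |z|^{-(1+α)}dz for α ∈ (0,2). Then G^ε(ω) := ∫_ℝ g(z)·c(ω, z/ε) ν(dz) converges in L¹(Ω,μ) to θ(ω)·∫_ℝ g(z) ν(dz) as ε → 0. -/

import Mathlib

/-!
For every `ω`, `|G^ε(ω) - θ(ω) ∫ g dν| ≤ ∫ |g z| |c(ω, z/ε) - θ(ω)| dν(z)`. Integrating in `ω`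
and exchanging the integrals (the integrand is dominated by `(M + |θ ω|) |g z|`) bounds the
`L¹(μ)` error by `∫ |g z| h(z/ε) dν(z)`, where `h w = 𝔼_μ |c(·, w) - θ|`. Now `h` is bounded by
`M + 𝔼_μ |θ|` and tends to `0` at infinity, while `z/ε → ±∞` for each `z ≠ 0`, so dominated
convergence concludes; the dominating function is integrable because `|g| ≤ min 1 z²` and
`min 1 z² · |z|^{-(1+α)}` is integrable exactly when `0 < α < 2`.
-/

open MeasureTheory Filter Set
open scoped ENNReal Topology

theorem integrable_min_one_sq_mul_abs_rpow {β : ℝ} (hβ₃ : -3 < β) (hβ₁ : β < -1) :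
    Integrable fun z : ℝ => min 1 (z ^ 2) * |z| ^ β := by
  set F : ℝ → ℝ := fun z => min 1 (z ^ 2) * |z| ^ β
  have hF_meas : AEStronglyMeasurable F := by fun_prop
  have hF_nonneg (z : ℝ) : 0 ≤ F z := by positivity
  have hIoo : IntegrableOn F (Ioo 0 1) := by
    have h_rpow : IntegrableOn (fun z : ℝ => z ^ (2 + β)) (Ioo 0 1) :=
      (intervalIntegral.integrableOn_Ioo_rpow_iff zero_lt_one).2 (by linarith)
    refine h_rpow.mono' hF_meas.restrict ?_
    filter_upwards [ae_restrict_mem measurableSet_Ioo] with z hz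
    rw [Real.norm_of_nonneg (hF_nonneg z)]
    dsimp only [F]
    rw [abs_of_pos hz.1, Real.rpow_add hz.1, Real.rpow_two]
    exact mul_le_mul_of_nonneg_right (min_le_right _ _) (Real.rpow_nonneg hz.1.le _)
  have hIoi : IntegrableOn F (Ioi 1) := by
    refine (integrableOn_Ioi_rpow_of_lt hβ₁ zero_lt_one).mono' hF_meas.restrict ?_
    filter_upwards [ae_restrict_mem measurableSet_Ioi] with z (hz : 1 < z)
    rw [Real.norm_of_nonneg (hF_nonneg z)]
    dsimp only [F]
    rw [abs_of_pos (zero_lt_one.trans hz)]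
    exact mul_le_of_le_one_left (by positivity) (min_le_left _ _)
  have hpos : IntegrableOn F (Ioi 0) := by
    rw [← Ioo_union_Ici_eq_Ioi zero_lt_one, integrableOn_union,
      integrableOn_Ici_iff_integrableOn_Ioi]
    exact ⟨hIoo, hIoi⟩
  have hneg : IntegrableOn F (Iio 0) := by
    simpa [F] using (show IntegrableOn F (Ioi (-0)) by rwa [neg_zero]).comp_neg_Iio
  rw [← integrableOn_univ, ← Iio_union_Ici (a := 0), integrableOn_union,
    integrableOn_Ici_iff_integrableOn_Ioi]
  exact ⟨hneg, hpos⟩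

noncomputable def stableLevyMeasure (α : ℝ) : Measure ℝ :=
  volume.withDensity fun z => ENNReal.ofReal (|z| ^ (-(1 + α)))

instance (α : ℝ) : SFinite (stableLevyMeasure α) := by
  unfold stableLevyMeasure; infer_instance

theorem integrable_min_one_sq_stableLevyMeasure {α : ℝ} (hα : 0 < α) (hα' : α < 2) :
    Integrable (fun z : ℝ => min 1 (z ^ 2)) (stableLevyMeasure α) := by
  rw [stableLevyMeasure, integrable_withDensity_iff (by fun_prop)
    (ae_of_all _ fun _ => ENNReal.ofReal_lt_top)]
  refine (integrable_min_one_sq_mul_abs_rpow (β := -(1 + α)) (by linarith) (by linarith)).congr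
    (ae_of_all _ fun z => ?_)
  dsimp only
  rw [ENNReal.toReal_ofReal (by positivity)]

theorem stableLevyMeasure_singleton_zero (α : ℝ) : stableLevyMeasure α {0} = 0 :=
  withDensity_absolutelyContinuous _ _ (measure_singleton 0)

theorem abs_integral_mul_sub_mul_integral_le {X : Type*} [MeasurableSpace X] {ν : Measure X}
    {f g : X → ℝ} (a : ℝ) (hg : Integrable g ν) (hgf : Integrable (fun x => g x * f x) ν) :
    |∫ x, g x * f x ∂ν - a * ∫ x, g x ∂ν| ≤ ∫ x, |g x| * |f x - a| ∂ν :=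
  calc |∫ x, g x * f x ∂ν - a * ∫ x, g x ∂ν| = |∫ x, g x * (f x - a) ∂ν| := by
        rw [mul_comm a, ← integral_mul_const, ← integral_sub hgf (hg.mul_const a)]
        simp_rw [mul_sub]
    _ ≤ ∫ x, |g x * (f x - a)| ∂ν := abs_integral_le_integral_abs
    _ = ∫ x, |g x| * |f x - a| ∂ν := by simp_rw [abs_mul]

theorem tendsto_div_nhdsGT_zero_cocompact {z : ℝ} (hz : z ≠ 0) :
    Tendsto (fun ε : ℝ => z / ε) (𝓝[>] 0) (cocompact ℝ) := by
  rw [← Metric.cobounded_eq_cocompact, ← tendsto_norm_atTop_iff_cobounded]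
  refine (tendsto_inv_nhdsGT_zero.const_mul_atTop (abs_pos.2 hz)).congr' ?_
  filter_upwards [self_mem_nhdsWithin] with ε (hε : 0 < ε)
  rw [Real.norm_eq_abs, abs_div, abs_of_pos hε, div_eq_mul_inv]

theorem tendsto_integral_mul_comp_div_nhdsGT_zero {ν : Measure ℝ} (hν : ν {0} = 0)
    {g h : ℝ → ℝ} {C : ℝ} (hg : Integrable g ν) (hh : Measurable h) (hC : ∀ w, |h w| ≤ C)
    (hlim : Tendsto h (cocompact ℝ) (𝓝 0)) :
    Tendsto (fun ε => ∫ z, g z * h (z / ε) ∂ν) (𝓝[>] 0) (𝓝 0) := by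
  rw [← integral_zero ℝ ℝ (μ := ν)]
  refine tendsto_integral_filter_of_dominated_convergence (fun z => ‖g z‖ * C)
    (Eventually.of_forall fun ε =>
      hg.1.mul (hh.comp (measurable_div_const ε)).aestronglyMeasurable)
    (Eventually.of_forall fun ε => ae_of_all _ fun z => ?_) (hg.norm.mul_const C) ?_
  · rw [norm_mul, Real.norm_eq_abs (h _)]
    exact mul_le_mul_of_nonneg_left (hC _) (norm_nonneg _)
  · filter_upwards [measure_eq_zero_iff_ae_notMem.1 hν] with z hz
    simpa using ((hlim.comp (tendsto_div_nhdsGT_zero_cocompact hz)).const_mul (g z))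

section

variable {Ω : Type*} [MeasurableSpace Ω] {μ : Measure Ω}

theorem integral_abs_sub_le_of_abs_le [IsProbabilityMeasure μ] {f θ : Ω → ℝ} {M : ℝ}
    (hf : ∀ ω, |f ω| ≤ M) (hθ : Integrable θ μ) :
    ∫ ω, |f ω - θ ω| ∂μ ≤ M + ∫ ω, |θ ω| ∂μ :=
  calc ∫ ω, |f ω - θ ω| ∂μ ≤ ∫ ω, (M + |θ ω|) ∂μ :=
        integral_mono_of_nonneg (ae_of_all _ fun _ => abs_nonneg _)
          ((integrable_const M).add hθ.abs)
          (ae_of_all _ fun ω => (abs_sub _ _).trans (add_le_add_left (hf ω) _))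
    _ = M + ∫ ω, |θ ω| ∂μ := by
        rw [integral_add (integrable_const M) hθ.abs, integral_const]
        simp

theorem measurable_integral_abs_sub [SFinite μ] {c : Ω × ℝ → ℝ} {θ : Ω → ℝ}
    (hc : Measurable c) (hθ : AEStronglyMeasurable θ μ) :
    Measurable fun w => ∫ ω, |c (ω, w) - θ ω| ∂μ := by
  have hθ' := hθ.stronglyMeasurable_mk.measurable
  have h_eq : (fun w => ∫ ω, |c (ω, w) - θ ω| ∂μ) =
      fun w => ∫ ω, |c (ω, w) - hθ.mk θ ω| ∂μ :=
    funext fun w => integral_congr_ae (hθ.ae_eq_mk.mono fun ω hω => by simp only [hω])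
  rw [h_eq]
  exact (StronglyMeasurable.integral_prod_right'
    (f := fun p : ℝ × Ω => |c (p.2, p.1) - hθ.mk θ p.2|) (by fun_prop)).measurable

variable {ν : Measure ℝ} {k : Ω × ℝ → ℝ} {θ : Ω → ℝ} {g : ℝ → ℝ} {M : ℝ}

theorem integrable_prod_abs_mul_abs_sub [IsFiniteMeasure μ] [SFinite ν] (hg : Integrable g ν)
    (hk : Measurable k) (hM : ∀ p, |k p| ≤ M) (hθ : Integrable θ μ) :
    Integrable (fun p : Ω × ℝ => |g p.2| * |k p - θ p.1|) (μ.prod ν) := by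
  refine (((integrable_const M).add hθ.abs).mul_prod hg.abs).mono' ?_ (ae_of_all _ fun p => ?_)
  · exact hg.1.comp_snd.norm.mul (hk.aestronglyMeasurable.sub hθ.1.comp_fst).norm
  · rw [Real.norm_of_nonneg (by positivity), mul_comm]
    exact mul_le_mul_of_nonneg_right ((abs_sub _ _).trans (add_le_add_left (hM p) _))
      (abs_nonneg _)

theorem integral_abs_integral_mul_sub_le [IsFiniteMeasure μ] [SFinite ν] (hg : Integrable g ν)
    (hk : Measurable k) (hM : ∀ p, |k p| ≤ M) (hθ : Integrable θ μ) :
    ∫ ω, |∫ z, g z * k (ω, z) ∂ν - θ ω * ∫ z, g z ∂ν| ∂μ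
      ≤ ∫ z, |g z| * ∫ ω, |k (ω, z) - θ ω| ∂μ ∂ν := by
  have hF := integrable_prod_abs_mul_abs_sub hg hk hM hθ
  calc ∫ ω, |∫ z, g z * k (ω, z) ∂ν - θ ω * ∫ z, g z ∂ν| ∂μ
      ≤ ∫ ω, ∫ z, |g z| * |k (ω, z) - θ ω| ∂ν ∂μ :=
        integral_mono_of_nonneg (ae_of_all _ fun _ => abs_nonneg _) hF.integral_prod_left
          (ae_of_all _ fun ω => abs_integral_mul_sub_mul_integral_le _ hg
            (hg.mul_bdd (hk.comp measurable_prodMk_left).aestronglyMeasurable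
              (ae_of_all _ fun z => hM _)))
    _ = ∫ z, ∫ ω, |g z| * |k (ω, z) - θ ω| ∂μ ∂ν := integral_integral_swap hF
    _ = ∫ z, |g z| * ∫ ω, |k (ω, z) - θ ω| ∂μ ∂ν := by simp_rw [integral_const_mul]

theorem tendsto_integral_abs_integral_mul_comp_div_sub [IsProbabilityMeasure μ] [SFinite ν]
    (hν : ν {0} = 0) (hg : Integrable g ν) {c : Ω × ℝ → ℝ} (hc : Measurable c)
    (hM : ∀ p, |c p| ≤ M) (hθ : Integrable θ μ)
    (hconv : Tendsto (fun w => ∫ ω, |c (ω, w) - θ ω| ∂μ) (cocompact ℝ) (𝓝 0)) :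
    Tendsto (fun ε => ∫ ω, |∫ z, g z * c (ω, z / ε) ∂ν - θ ω * ∫ z, g z ∂ν| ∂μ)
      (𝓝[>] 0) (𝓝 0) :=
  squeeze_zero (fun _ => integral_nonneg fun _ => abs_nonneg _)
    (fun ε => integral_abs_integral_mul_sub_le (k := fun p => c (p.1, p.2 / ε)) hg
      (by fun_prop) (fun _ => hM _) hθ)
    (tendsto_integral_mul_comp_div_nhdsGT_zero hν hg.abs (measurable_integral_abs_sub hc hθ.1)
      (fun w => (abs_of_nonneg (integral_nonneg fun _ => abs_nonneg _)).trans_le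
        (integral_abs_sub_le_of_abs_le (fun _ => hM _) hθ))
      hconv)

end

/-- If the kernel `c(·,z)` converges in `L¹(μ)` to `θ` as `|z| → ∞` and `g` is continuous
with `|g(z)| ≤ min(1,z²)`, then `G^ε(ω) = ∫ g(z) c(ω, z/ε) dν(z)` converges in `L¹(μ)`
to `θ(ω) ∫ g dν` as `ε → 0⁺`, where `ν(dz) = |z|^{-(1+α)}dz`. -/
theorem kernel_averaged_convergence
    {Ω : Type*} [MeasurableSpace Ω] (μ : Measure Ω) [IsProbabilityMeasure μ]
    (α : ℝ) (hα : 0 < α) (hα' : α < 2)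
    (ν : Measure ℝ)
    (hν : ν = volume.withDensity fun z => ENNReal.ofReal (|z| ^ (-(1 + α))))
    (c : Ω × ℝ → ℝ) (hc : Measurable c) (M : ℝ) (hM : ∀ p, |c p| ≤ M)
    (θ : Ω → ℝ) (hθ : Integrable θ μ)
    (hconv : Tendsto (fun z : ℝ => ∫ ω, |c (ω, z) - θ ω| ∂μ)
      (Filter.cocompact ℝ) (𝓝 0))
    (g : ℝ → ℝ) (hg : Continuous g) (hgbound : ∀ z, |g z| ≤ min 1 (z ^ 2)) :
    Tendsto (fun ε : ℝ =>
        ∫ ω, |(∫ z, g z * c (ω, z / ε) ∂ν) - θ ω * ∫ z, g z ∂ν| ∂μ)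
      (𝓝[>] (0 : ℝ)) (𝓝 0) := by
  change ν = stableLevyMeasure α at hν
  subst hν
  have hg_int : Integrable g (stableLevyMeasure α) :=
    (integrable_min_one_sq_stableLevyMeasure hα hα').mono' hg.aestronglyMeasurable
      (ae_of_all _ hgbound)
  exact tendsto_integral_abs_integral_mul_comp_div_sub (stableLevyMeasure_singleton_zero α)
    hg_int hc hM hθ hconv
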